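/- arXiv:1910.09760 — 2 statements merged into one kernel-verified Lean document; each statement's English description precedes it below -/
import Mathlib

section
/- In a tree-shaped query graph whose node set is partitioned into constant nodes (entities/literals) and variable nodes, if a constant node e has the property that every neighbor of e is also a constant node, then deleting e and its incident edges does not change the set of answer assignments (i.e., the set of mappings of the variable nodes to graph nodes that extend to a homomorphism of the query graph into the knowledge graph), provided every edge incident to e is actually realized in the knowledge graph. -/
/-- In a tree-shaped query graph (over query nodes `QN`, with edges `E`
labeled by `L`, constant nodes identified via `cval` with nodes of the knowledge graph
`KG`), if a constant node `e` has only constant neighbors, and every edge incident to `e`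
is realized in the knowledge graph, then deleting `e` and its incident edges does not
change the set of answer assignments. -/
theorem query_delete_constant_node {V L QN : Type*}
    (KG : V → L → V → Prop)
    (E : Set (QN × L × QN))
    (isConst : QN → Prop) (cval : QN → V)
    (e : QN)
    -- the query graph is a tree
    (htree : (SimpleGraph.fromEdgeSet
      {s : Sym2 QN | ∃ a l b, (a, l, b) ∈ E ∧ s = s(a, b)}).IsTree)
    -- `e` is a constant node
    (hce : isConst e)
    -- every neighbor of `e` is a constant node
    (hnb : ∀ t ∈ E, (t.1 = e → isConst t.2.2) ∧ (t.2.2 = e → isConst t.1))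
    -- every edge incident to `e` is realized in the knowledge graph
    (hreal : ∀ t ∈ E, t.1 = e ∨ t.2.2 = e → KG (cval t.1) t.2.1 (cval t.2.2)) :
    -- answer assignments of `q` = answer assignments of `q` with `e` and its edges deleted
    {σ : QN → V | (∀ n, isConst n → σ n = cval n) ∧
        ∀ t ∈ E, KG (σ t.1) t.2.1 (σ t.2.2)} =
    {σ : QN → V | (∀ n, isConst n → σ n = cval n) ∧
        ∀ t ∈ E, t.1 ≠ e ∧ t.2.2 ≠ e → KG (σ t.1) t.2.1 (σ t.2.2)} := by
  ext σ
  simp only [Set.mem_setOf_eq]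
  constructor
  · rintro ⟨h1, h2⟩
    exact ⟨h1, fun t ht _ => h2 t ht⟩
  · rintro ⟨h1, h2⟩
    refine ⟨h1, fun t ht => ?_⟩
    by_cases h : t.1 = e ∨ t.2.2 = e
    · have hc1 : isConst t.1 := by
        rcases h with h | h
        · rw [h]; exact hce
        · exact (hnb t ht).2 h
      have hc2 : isConst t.2.2 := by
        rcases h with h | h
        · exact (hnb t ht).1 h
        · rw [h]; exact hce
      rw [h1 _ hc1, h1 _ hc2]
      exact hreal t ht h
    · push_neg at h
      exact h2 t ht h
end

section
/- Let q be a query graph that is a tree with exactly one variable node (the answer node). If a constant node e of q is an intermediate node (i.e., e is not a leaf of the tree) and the variable node is a leaf, then there exists an edge of q incident to e whose removal (together with the resulting dangling subtree not containing the variable) does not change the set of answers, assuming all edges between constants are realized in the knowledge graph. Hence under the non-redundancy assumption (every edge of q constrains the answer set), e must be a non-intermediate (leaf) node. -/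
/-- Let `q` be a tree query graph with exactly one variable node `v`
(the answer node), which is a leaf.  If a constant node `e` is an intermediate node
(degree at least 2), and all edges between constants are realized in the knowledge graph,
then some edge of `q` incident to `e` can be removed without changing the set of answer
assignments. -/
theorem intermediate_constant_has_redundant_edge {V L QN : Type*}
    (KG : V → L → V → Prop)
    (E : Set (QN × L × QN))
    (isConst : QN → Prop) (cval : QN → V)
    (e v : QN)
    -- the query graph is a tree
    (htree : (SimpleGraph.fromEdgeSet
      {s : Sym2 QN | ∃ a l b, (a, l, b) ∈ E ∧ s = s(a, b)}).IsTree)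
    -- `v` is the unique variable node
    (hv : ¬ isConst v)
    (huniq : ∀ n, ¬ isConst n → n = v)
    -- the variable node `v` is a leaf: it has at most one incident edge
    (hleaf : ∀ t1 ∈ E, ∀ t2 ∈ E, (t1.1 = v ∨ t1.2.2 = v) → (t2.1 = v ∨ t2.2.2 = v) →
      t1 = t2)
    -- `e` is a constant node
    (hce : isConst e)
    -- `e` is an intermediate node: it has at least two distinct neighbors
    (hinter : ∃ a b : QN, a ≠ b ∧ (∃ l, (e, l, a) ∈ E ∨ (a, l, e) ∈ E) ∧
      (∃ l, (e, l, b) ∈ E ∨ (b, l, e) ∈ E))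
    -- all edges between constants are realized in the knowledge graph
    (hreal : ∀ t ∈ E, isConst t.1 → isConst t.2.2 → KG (cval t.1) t.2.1 (cval t.2.2)) :
    ∃ t ∈ E, (t.1 = e ∨ t.2.2 = e) ∧
      {σ : QN → V | (∀ n, isConst n → σ n = cval n) ∧
          ∀ t' ∈ E \ {t}, KG (σ t'.1) t'.2.1 (σ t'.2.2)} =
      {σ : QN → V | (∀ n, isConst n → σ n = cval n) ∧
          ∀ t' ∈ E, KG (σ t'.1) t'.2.1 (σ t'.2.2)} := by
  obtain ⟨a, b, hab, ⟨la, ha⟩, ⟨lb, hb⟩⟩ := hinter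
  have key : ∀ w l, w ≠ v → ((e, l, w) ∈ E ∨ (w, l, e) ∈ E) →
      ∃ t ∈ E, (t.1 = e ∨ t.2.2 = e) ∧
      {σ : QN → V | (∀ n, isConst n → σ n = cval n) ∧
          ∀ t' ∈ E \ {t}, KG (σ t'.1) t'.2.1 (σ t'.2.2)} =
      {σ : QN → V | (∀ n, isConst n → σ n = cval n) ∧
          ∀ t' ∈ E, KG (σ t'.1) t'.2.1 (σ t'.2.2)} := by
    intro w l hwv hmem
    have hcw : isConst w := by
      by_contra hw
      exact hwv (huniq w hw)
    obtain h | h := hmem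
    · refine ⟨(e, l, w), h, Or.inl rfl, ?_⟩
      ext σ
      simp only [Set.mem_setOf_eq]
      constructor
      · rintro ⟨h1, h2⟩
        refine ⟨h1, fun t' ht' => ?_⟩
        by_cases heq : t' = (e, l, w)
        · subst heq
          have := hreal (e, l, w) h hce hcw
          simpa [h1 e hce, h1 w hcw] using this
        · exact h2 t' ⟨ht', heq⟩
      · rintro ⟨h1, h2⟩
        exact ⟨h1, fun t' ht' => h2 t' ht'.1⟩
    · refine ⟨(w, l, e), h, Or.inr rfl, ?_⟩
      ext σ
      simp only [Set.mem_setOf_eq]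
      constructor
      · rintro ⟨h1, h2⟩
        refine ⟨h1, fun t' ht' => ?_⟩
        by_cases heq : t' = (w, l, e)
        · subst heq
          have := hreal (w, l, e) h hcw hce
          simpa [h1 e hce, h1 w hcw] using this
        · exact h2 t' ⟨ht', heq⟩
      · rintro ⟨h1, h2⟩
        exact ⟨h1, fun t' ht' => h2 t' ht'.1⟩
  by_cases hav : a = v
  · exact key b lb (fun hbv => hab (hav.trans hbv.symm)) hb
  · exact key a la hav ha
end
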